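/- arXiv:2509.13274 — 4 statements merged into one kernel-verified Lean document; each statement's English description precedes it below -/
import Mathlib

section
/- Let A_N = J_N + 𝔷 Id_N where J_N is the N×N nilpotent Jordan block and 𝔷 ∈ ℂ. For subsets X = {x₁ < ⋯ < x_k} and Y = {y₁ < ⋯ < y_k} of [N], the minor obtained by deleting rows X and columns Y satisfies det(A_N[Xᶜ; Yᶜ]) = 𝔷^{y₁−1} · (∏_{i=2}^{k} 𝔷^{y_i − x_{i−1} − 1}) · 𝔷^{N − x_k} · 1{y_i ≤ x_i < y_{i+1} for all i ∈ [k]}, with the convention y_{k+1} = ∞. -/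
namespace JordanMinorAux

variable {N c k : ℕ}

/-- rank: number of elements of `S` that are `≤ v` (as naturals). -/
def rk {N : ℕ} (S : Finset (Fin N)) (v : ℕ) : ℕ :=
  (S.filter (fun u : Fin N => (u : ℕ) ≤ v)).card

variable {N c : ℕ}

lemma exists_index {S : Finset (Fin N)} (h : S.card = c) {u : Fin N} (hu : u ∈ S) :
    ∃ i : Fin c, S.orderEmbOfFin h i = u := by
  have := S.range_orderEmbOfFin h
  have : u ∈ Set.range (S.orderEmbOfFin h) := by rw [this]; exact hu
  exact this

/-- transfer sums over `S` to sums over `Fin c`. -/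
lemma sum_emb {S : Finset (Fin N)} (h : S.card = c) (g : Fin N → ℤ) :
    ∑ i : Fin c, g (S.orderEmbOfFin h i) = ∑ u ∈ S, g u := by
  apply Finset.sum_bij (fun i _ => S.orderEmbOfFin h i)
  · intro i _; exact S.orderEmbOfFin_mem h i
  · intro i _ j _ hij; exact (S.orderEmbOfFin h).injective hij
  · intro u hu; obtain ⟨i, hi⟩ := exists_index h hu; exact ⟨i, Finset.mem_univ _, hi⟩
  · intro i _; rfl

lemma rk_eq_card_filter {S : Finset (Fin N)} (h : S.card = c) (v : ℕ) :
    rk S v = (Finset.univ.filter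
      (fun i : Fin c => ((S.orderEmbOfFin h i : Fin N) : ℕ) ≤ v)).card := by
  rw [rk]
  apply Finset.card_bij (fun (u : Fin N) (hu : u ∈ S.filter (fun u : Fin N => (u:ℕ) ≤ v)) =>
    (exists_index h (Finset.mem_filter.mp hu).1).choose)
  · intro u hu
    have hc := (exists_index h (Finset.mem_filter.mp hu).1).choose_spec
    simp only [Finset.mem_filter, Finset.mem_univ, true_and]
    rw [hc]; exact (Finset.mem_filter.mp hu).2
  · intro u hu u' hu' heq
    have hc := (exists_index h (Finset.mem_filter.mp hu).1).choose_spec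
    have hc' := (exists_index h (Finset.mem_filter.mp hu').1).choose_spec
    rw [← hc, ← hc', heq]
  · intro i hi
    refine ⟨S.orderEmbOfFin h i, ?_, ?_⟩
    · simp only [Finset.mem_filter]
      exact ⟨S.orderEmbOfFin_mem h i, (Finset.mem_filter.mp hi).2⟩
    · have hmem : (S.orderEmbOfFin h i : Fin N) ∈ S := S.orderEmbOfFin_mem h i
      have hc := (exists_index h hmem).choose_spec
      exact (S.orderEmbOfFin h).injective hc

/-- the i-th smallest element of `S` is `≤ v` iff `i < rk S v`. -/
lemma orderEmb_le_iff {S : Finset (Fin N)} (h : S.card = c) (i : Fin c) (v : ℕ) :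
    ((S.orderEmbOfFin h i : Fin N) : ℕ) ≤ v ↔ (i : ℕ) < rk S v := by
  rw [rk_eq_card_filter h v]
  constructor
  · intro hle
    have hsub : Finset.Iic i ⊆ Finset.univ.filter
        (fun j : Fin c => ((S.orderEmbOfFin h j : Fin N) : ℕ) ≤ v) := by
      intro j hj
      simp only [Finset.mem_Iic] at hj
      simp only [Finset.mem_filter, Finset.mem_univ, true_and]
      calc ((S.orderEmbOfFin h j : Fin N) : ℕ) ≤ (S.orderEmbOfFin h i : Fin N) := by
            exact_mod_cast (S.orderEmbOfFin h).monotone hj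
        _ ≤ v := hle
    have := Finset.card_le_card hsub
    rw [Fin.card_Iic] at this
    omega
  · intro hlt
    by_contra hgt
    push_neg at hgt
    have hsub : Finset.univ.filter
        (fun j : Fin c => ((S.orderEmbOfFin h j : Fin N) : ℕ) ≤ v) ⊆ Finset.Iio i := by
      intro j hj
      simp only [Finset.mem_filter, Finset.mem_univ, true_and] at hj
      simp only [Finset.mem_Iio]
      by_contra hji
      push_neg at hji
      have : ((S.orderEmbOfFin h i : Fin N) : ℕ) ≤ (S.orderEmbOfFin h j : Fin N) := by
        exact_mod_cast (S.orderEmbOfFin h).monotone hji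
      omega
    have := Finset.card_le_card hsub
    rw [Fin.card_Iio] at this
    omega

lemma card_univ_filter_le (v : ℕ) :
    ((Finset.univ : Finset (Fin N)).filter (fun u : Fin N => (u : ℕ) ≤ v)).card
      = min (v + 1) N := by
  rw [← Finset.card_image_of_injective (Finset.univ.filter (fun u : Fin N => (u : ℕ) ≤ v))
    Fin.val_injective]
  have : (Finset.univ.filter (fun u : Fin N => (u : ℕ) ≤ v)).image Fin.val
      = Finset.range (min (v + 1) N) := by
    ext n
    simp only [Finset.mem_image, Finset.mem_filter, Finset.mem_univ, true_and,
      Finset.mem_range]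
    constructor
    · rintro ⟨u, hu, rfl⟩; omega
    · intro hn; exact ⟨⟨n, by omega⟩, by simp; omega, rfl⟩
  rw [this, Finset.card_range]

lemma rk_add_rk_compl (S : Finset (Fin N)) (v : ℕ) :
    rk S v + rk Sᶜ v = min (v + 1) N := by
  rw [rk, rk, ← card_univ_filter_le (N := N) v, ← Finset.card_union_of_disjoint
    (Finset.disjoint_filter_filter disjoint_compl_right), ← Finset.filter_union,
    Finset.union_compl]

lemma rk_full (S : Finset (Fin N)) {v : ℕ} (hv : N ≤ v + 1) : rk S v = S.card := by
  rw [rk, Finset.filter_true_of_mem]; intro u _; omega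

lemma rk_le_card (S : Finset (Fin N)) (v : ℕ) : rk S v ≤ S.card :=
  Finset.card_filter_le _ _

lemma index_le_val {S : Finset (Fin N)} (h : S.card = c) (i : Fin c) :
    (i : ℕ) ≤ ((S.orderEmbOfFin h i : Fin N) : ℕ) := by
  have h1 : (i : ℕ) < rk S ((S.orderEmbOfFin h i : Fin N) : ℕ) :=
    (orderEmb_le_iff h i _).mp le_rfl
  have h2 := rk_add_rk_compl S ((S.orderEmbOfFin h i : Fin N) : ℕ)
  omega

lemma emb_le_iff {S T : Finset (Fin N)} (hS : S.card = c) (hT : T.card = c) (d : ℕ) :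
    (∀ i : Fin c, ((S.orderEmbOfFin hS i : Fin N) : ℕ)
        ≤ ((T.orderEmbOfFin hT i : Fin N) : ℕ) + d)
    ↔ (∀ v : ℕ, rk T v ≤ rk S (v + d)) := by
  constructor
  · intro hp v
    rw [rk_eq_card_filter hS, rk_eq_card_filter hT]
    apply Finset.card_le_card
    intro i hi
    simp only [Finset.mem_filter, Finset.mem_univ, true_and] at hi ⊢
    have := hp i; omega
  · intro hr i
    have h1 : (i : ℕ) < rk T ((T.orderEmbOfFin hT i : Fin N) : ℕ) :=
      (orderEmb_le_iff hT i _).mp le_rfl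
    exact (orderEmb_le_iff hS i _).mpr (lt_of_lt_of_le h1 (hr _))

lemma cond1_iff {X Y : Finset (Fin N)} (hX : X.card = k) (hY : Y.card = k)
    (hXc : Xᶜ.card = c) (hYc : Yᶜ.card = c) :
    (∀ j : Fin c, ((Xᶜ.orderEmbOfFin hXc j : Fin N) : ℕ)
        ≤ ((Yᶜ.orderEmbOfFin hYc j : Fin N) : ℕ))
    ↔ (∀ i : Fin k, ((Y.orderEmbOfFin hY i : Fin N) : ℕ)
        ≤ ((X.orderEmbOfFin hX i : Fin N) : ℕ)) := by
  have l1 := emb_le_iff hXc hYc 0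
  have l2 := emb_le_iff hY hX 0
  simp only [add_zero] at l1 l2
  rw [l1, l2]
  constructor <;> intro h v <;>
  · have e1 := rk_add_rk_compl X v
    have e2 := rk_add_rk_compl Y v
    have := h v
    omega

lemma cond2_iff_rk {X Y : Finset (Fin N)} (hX : X.card = k) (hY : Y.card = k)
    (hXc : Xᶜ.card = c) (hYc : Yᶜ.card = c) :
    (∀ j : Fin c, ((Yᶜ.orderEmbOfFin hYc j : Fin N) : ℕ)
        ≤ ((Xᶜ.orderEmbOfFin hXc j : Fin N) : ℕ) + 1)
    ↔ (∀ v : ℕ, rk Y (v + 1) ≤ rk X v + 1) := by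
  rw [emb_le_iff hYc hXc 1]
  have hNk : (N : ℕ) - k = c := by
    rw [← hXc, Finset.card_compl, hX]; simp
  constructor <;> intro h v <;>
  · have e1 := rk_add_rk_compl X v
    have e2 := rk_add_rk_compl Y (v + 1)
    have b1 : rk X v ≤ k := hX ▸ rk_le_card X v
    have b2 : rk Y (v + 1) ≤ k := hY ▸ rk_le_card Y (v + 1)
    have b3 : rk Xᶜ v ≤ c := hXc ▸ rk_le_card Xᶜ v
    have b4 : rk Yᶜ (v + 1) ≤ c := hYc ▸ rk_le_card Yᶜ (v + 1)
    have f1 : N ≤ v + 1 → rk X v = k := fun hv => hX ▸ rk_full X hv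
    have f2 : N ≤ v + 2 → rk Y (v + 1) = k := fun hv => hY ▸ rk_full Y hv
    have := h v
    omega

lemma cond2_iff_x {X Y : Finset (Fin N)} (hk : 0 < k) (hX : X.card = k) (hY : Y.card = k) :
    (∀ v : ℕ, rk Y (v + 1) ≤ rk X v + 1)
    ↔ (∀ i : Fin k, ∀ h : (i : ℕ) + 1 < k,
        ((X.orderEmbOfFin hX i : Fin N) : ℕ) < (Y.orderEmbOfFin hY ⟨(i : ℕ) + 1, h⟩ : Fin N)) := by
  constructor
  · intro hr i h
    by_cases h0 : ((X.orderEmbOfFin hX i : Fin N) : ℕ) = 0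
    · have := index_le_val hY (⟨(i : ℕ) + 1, h⟩ : Fin k)
      simp only [] at this
      omega
    · set w := ((X.orderEmbOfFin hX i : Fin N) : ℕ) with hw
      have hx : ¬ ((i : ℕ) < rk X (w - 1)) := by
        rw [← orderEmb_le_iff hX i]; omega
      have hr' := hr (w - 1)
      have hw1 : w - 1 + 1 = w := by omega
      rw [hw1] at hr'
      by_contra hc
      push_neg at hc
      have : ((⟨(i : ℕ) + 1, h⟩ : Fin k) : ℕ) < rk Y w :=
        (orderEmb_le_iff hY _ _).mp hc
      simp at this
      omega
  · intro hil v
    rw [rk_eq_card_filter hY, rk_eq_card_filter hX]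
    set T1 := Finset.univ.filter
      (fun i : Fin k => ((Y.orderEmbOfFin hY i : Fin N) : ℕ) ≤ v + 1) with hT1
    set T2 := Finset.univ.filter
      (fun i : Fin k => ((X.orderEmbOfFin hX i : Fin N) : ℕ) ≤ v) with hT2
    have step1 : T1.card ≤ (T1.erase ⟨0, hk⟩).card + 1 := by
      by_cases hm : (⟨0, hk⟩ : Fin k) ∈ T1
      · rw [Finset.card_erase_of_mem hm]; omega
      · rw [Finset.erase_eq_of_notMem hm]; omega
    set φ : Fin k → Fin k := fun i => ⟨(i : ℕ) - 1, lt_of_le_of_lt (Nat.sub_le _ _) i.isLt⟩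
      with hφ
    have step2 : (T1.erase ⟨0, hk⟩).card ≤ T2.card := by
      refine Finset.card_le_card_of_injOn φ ?_ ?_
      · intro i hi
        have hne : i ≠ ⟨0, hk⟩ := Finset.ne_of_mem_erase hi
        have hipos : 0 < (i : ℕ) := by
          rcases Nat.eq_zero_or_pos (i : ℕ) with h0 | h0
          · exact absurd (Fin.ext h0) hne
          · exact h0
        have hmem := Finset.mem_of_mem_erase hi
        rw [hT1, Finset.mem_filter] at hmem
        have hyi := hmem.2
        have hlt : ((φ i : Fin k) : ℕ) + 1 < k := by simp [hφ]; omega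
        have hthis := hil (φ i) hlt
        have heq : (⟨((φ i : Fin k) : ℕ) + 1, hlt⟩ : Fin k) = i := Fin.ext (by simp [hφ]; omega)
        rw [heq] at hthis
        rw [hT2, Finset.mem_coe, Finset.mem_filter]
        exact ⟨Finset.mem_univ _, by omega⟩
      · intro i hi j hj hij
        have hne : i ≠ ⟨0, hk⟩ := Finset.ne_of_mem_erase hi
        have hne' : j ≠ ⟨0, hk⟩ := Finset.ne_of_mem_erase hj
        have h1 : 0 < (i : ℕ) := by
          rcases Nat.eq_zero_or_pos (i : ℕ) with h0 | h0
          · exact absurd (Fin.ext h0) hne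
          · exact h0
        have h2 : 0 < (j : ℕ) := by
          rcases Nat.eq_zero_or_pos (j : ℕ) with h0 | h0
          · exact absurd (Fin.ext h0) hne'
          · exact h0
        apply Fin.ext
        have : ((i : ℕ) - 1) = ((j : ℕ) - 1) := by
          have := congrArg Fin.val hij
          simpa [hφ] using this
        omega
    omega

lemma det_eq_prod_diag {m : ℕ} (M : Matrix (Fin m) (Fin m) ℂ) (a b : Fin m → ℕ)
    (ha : StrictMono a) (hb : StrictMono b)
    (hM : ∀ i j, M i j ≠ 0 → a i ≤ b j ∧ b j ≤ a i + 1) :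
    M.det = ∏ i, M i i := by
  rw [Matrix.det_apply]
  rw [Finset.sum_eq_single (1 : Equiv.Perm (Fin m))]
  · simp
  · intro σ _ hσ
    suffices h : ∃ i, M (σ i) i = 0 by
      obtain ⟨i, hi⟩ := h
      have : (∏ i : Fin m, M (σ i) i) = 0 :=
        Finset.prod_eq_zero (Finset.mem_univ i) hi
      rw [this, smul_zero]
    by_contra hc
    push_neg at hc
    have key : ∀ i, a (σ i) ≤ b i ∧ b i ≤ a (σ i) + 1 := fun i => hM _ _ (hc i)
    have hFne : (Finset.univ.filter (fun i => σ i ≠ i)).Nonempty := by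
      rw [Finset.filter_nonempty_iff]
      by_contra hemp
      push_neg at hemp
      exact hσ (Equiv.ext fun i => by simpa using hemp i (Finset.mem_univ i))
    set F := Finset.univ.filter (fun i => σ i ≠ i) with hF
    set i0 := F.min' hFne with hi0
    have hmem : σ i0 ≠ i0 := (Finset.mem_filter.mp (F.min'_mem hFne)).2
    have hminimal : ∀ l, σ l ≠ l → i0 ≤ l := fun l hl =>
      F.min'_le l (Finset.mem_filter.mpr ⟨Finset.mem_univ _, hl⟩)
    have h1 : i0 < σ i0 := by
      rcases lt_or_gt_of_ne hmem with hlt | hgt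
      · exfalso
        have : σ (σ i0) = σ i0 := by
          by_contra hne
          exact absurd (hminimal _ hne) (not_le.mpr hlt)
        exact hmem (σ.injective this)
      · exact hgt
    set j := σ.symm i0 with hj
    have hσj : σ j = i0 := σ.apply_symm_apply i0
    have h2 : i0 < j := by
      rcases lt_trichotomy j i0 with hlt | heq | hgt
      · exfalso
        have hne : σ j ≠ j := by rw [hσj]; exact (ne_of_lt hlt).symm
        exact absurd (hminimal _ hne) (not_le.mpr hlt)
      · exfalso; rw [heq] at hσj; exact hmem hσj
      · exact hgt
    have k1 : a (σ i0) ≤ b i0 := (key i0).1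
    have k2 : b j ≤ a (σ j) + 1 := (key j).2
    rw [hσj] at k2
    have s1 : a i0 < a (σ i0) := ha h1
    have s2 : b i0 < b j := hb h2
    omega
  · intro h; exact absurd (Finset.mem_univ 1) h

end JordanMinorAux



/-- The `N×N` nilpotent Jordan block: ones on the first superdiagonal. -/
def jordan (N : ℕ) : Matrix (Fin N) (Fin N) ℂ :=
  Matrix.of fun i j => if (i : ℕ) + 1 = (j : ℕ) then 1 else 0

/-- The minor of `A` with rows indexed by `X` and columns by `Y` (in increasing order);
zero by convention if the cardinalities differ. -/
noncomputable def subdet {N : ℕ} (A : Matrix (Fin N) (Fin N) ℂ) (X Y : Finset (Fin N)) : ℂ :=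
  if h : Y.card = X.card then
    Matrix.det (Matrix.of fun i j : Fin X.card =>
      A (X.orderEmbOfFin rfl i) (Y.orderEmbOfFin h j))
  else 0

/-- Minor formula for `A_N = J_N + 𝔷·Id`: deleting rows `X = {x₁<⋯<x_k}` and columns
`Y = {y₁<⋯<y_k}` yields `𝔷^{y₁−1}·∏_{i=2}^k 𝔷^{y_i−x_{i−1}−1}·𝔷^{N−x_k}` if the interlacing
condition `y_i ≤ x_i < y_{i+1}` holds (with `y_{k+1} = ∞`), and `0` otherwise.
(Indices here are 0-based: `(y 0 : ℕ) = y₁ − 1` and `N − 1 − (x (k-1) : ℕ) = N − x_k`.) -/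
theorem jordan_shift_minor
    (N k : ℕ) (hk : 0 < k) (z : ℂ) (X Y : Finset (Fin N))
    (hX : X.card = k) (hY : Y.card = k) :
    subdet (jordan N + z • (1 : Matrix (Fin N) (Fin N) ℂ)) Xᶜ Yᶜ =
      if (∀ i : Fin k, (Y.orderEmbOfFin hY i : Fin N) ≤ X.orderEmbOfFin hX i) ∧
         (∀ i : Fin k, ∀ h : (i : ℕ) + 1 < k,
            (X.orderEmbOfFin hX i : Fin N) < Y.orderEmbOfFin hY ⟨(i : ℕ) + 1, h⟩) then
        z ^ ((Y.orderEmbOfFin hY ⟨0, hk⟩ : Fin N) : ℕ) *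
          (∏ i : Fin k, if 0 < (i : ℕ) then
              z ^ (((Y.orderEmbOfFin hY i : Fin N) : ℕ) -
                ((X.orderEmbOfFin hX ⟨(i : ℕ) - 1,
                    lt_of_le_of_lt (Nat.sub_le _ _) i.isLt⟩ : Fin N) : ℕ) - 1)
            else 1) *
          z ^ (N - 1 - ((X.orderEmbOfFin hX ⟨k - 1, Nat.sub_lt hk Nat.one_pos⟩ : Fin N) : ℕ))
      else 0 := by
  open JordanMinorAux in
  classical
  have hcompl : Yᶜ.card = Xᶜ.card := by
    rw [Finset.card_compl, Finset.card_compl, hX, hY]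
  set A := jordan N + z • (1 : Matrix (Fin N) (Fin N) ℂ) with hAdef
  have hAentry : ∀ u v : Fin N, A u v =
      if (u : ℕ) = (v : ℕ) then z else if (u : ℕ) + 1 = (v : ℕ) then 1 else 0 := by
    intro u v
    simp only [hAdef, Matrix.add_apply, Matrix.smul_apply, Matrix.one_apply, jordan,
      Matrix.of_apply, smul_eq_mul]
    rcases eq_or_ne (u : ℕ) (v : ℕ) with h | h
    · rw [if_pos h, if_pos (Fin.ext h), if_neg (by omega), mul_one, zero_add]
    · rw [if_neg h, if_neg (fun hc => h (congrArg Fin.val hc)), mul_zero, add_zero]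
  -- abbreviations
  set a : Fin Xᶜ.card → Fin N := fun j => Xᶜ.orderEmbOfFin rfl j with hadef
  set b : Fin Xᶜ.card → Fin N := fun j => Yᶜ.orderEmbOfFin hcompl j with hbdef
  set x : Fin k → Fin N := fun i => X.orderEmbOfFin hX i with hxdef
  set y : Fin k → Fin N := fun i => Y.orderEmbOfFin hY i with hydef
  -- step 1 : subdet = product of diagonal entries
  have hdet : subdet A Xᶜ Yᶜ = ∏ j : Fin Xᶜ.card, A (a j) (b j) := by
    rw [subdet, dif_pos hcompl]
    have hM : (Matrix.of fun i j : Fin Xᶜ.card =>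
        A (Xᶜ.orderEmbOfFin rfl i) (Yᶜ.orderEmbOfFin hcompl j))
        = Matrix.of fun i j : Fin Xᶜ.card => A (a i) (b j) := rfl
    rw [hM, det_eq_prod_diag _ (fun j => ((a j : Fin N) : ℕ)) (fun j => ((b j : Fin N) : ℕ))]
    · rfl
    · intro p q hpq
      exact (Xᶜ.orderEmbOfFin rfl).strictMono hpq
    · intro p q hpq
      exact (Yᶜ.orderEmbOfFin hcompl).strictMono hpq
    · intro i j hne
      rw [Matrix.of_apply, hAentry] at hne
      split_ifs at hne with h1 h2
      · omega
      · omega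
      · exact absurd rfl hne
  -- the interlacing equivalences
  have hc1 := cond1_iff hX hY rfl hcompl
  have hc2 := (cond2_iff_rk hX hY rfl hcompl).trans (cond2_iff_x hk hX hY)
  by_cases hP : (∀ i : Fin k, (Y.orderEmbOfFin hY i : Fin N) ≤ X.orderEmbOfFin hX i) ∧
      (∀ i : Fin k, ∀ h : (i : ℕ) + 1 < k,
        (X.orderEmbOfFin hX i : Fin N) < Y.orderEmbOfFin hY ⟨(i : ℕ) + 1, h⟩)
  · -- positive case
    rw [if_pos hP]
    have hP1 : ∀ i : Fin k, ((y i : Fin N) : ℕ) ≤ ((x i : Fin N) : ℕ) := fun i => hP.1 i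
    have hP2 : ∀ i : Fin k, ∀ h : (i : ℕ) + 1 < k,
        ((x i : Fin N) : ℕ) < ((y ⟨(i : ℕ) + 1, h⟩ : Fin N) : ℕ) := fun i h => hP.2 i h
    have ha1 : ∀ j, ((a j : Fin N) : ℕ) ≤ ((b j : Fin N) : ℕ) := hc1.mpr hP1
    have ha2 : ∀ j, ((b j : Fin N) : ℕ) ≤ ((a j : Fin N) : ℕ) + 1 := hc2.mpr hP2
    have hfac : ∀ j, A (a j) (b j) = z ^ (((a j : Fin N) : ℕ) + 1 - ((b j : Fin N) : ℕ)) := by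
      intro j
      rw [hAentry]
      by_cases he : ((a j : Fin N) : ℕ) = ((b j : Fin N) : ℕ)
      · rw [if_pos he]
        have : ((a j : Fin N) : ℕ) + 1 - ((b j : Fin N) : ℕ) = 1 := by omega
        rw [this, pow_one]
      · have h2 : ((a j : Fin N) : ℕ) + 1 = ((b j : Fin N) : ℕ) := by
          have := ha1 j; have := ha2 j; omega
        rw [if_neg he, if_pos h2]
        have : ((a j : Fin N) : ℕ) + 1 - ((b j : Fin N) : ℕ) = 0 := by omega
        rw [this, pow_zero]
    rw [hdet, Finset.prod_congr rfl (fun j _ => hfac j), Finset.prod_pow_eq_pow_sum]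
    -- rewrite the RHS as a single power of z
    rw [Finset.prod_congr rfl (fun (i : Fin k) (_ : i ∈ (Finset.univ : Finset (Fin k))) =>
      show (if 0 < (i : ℕ) then
          z ^ (((y i : Fin N) : ℕ) - ((x ⟨(i : ℕ) - 1,
            lt_of_le_of_lt (Nat.sub_le _ _) i.isLt⟩ : Fin N) : ℕ) - 1) else 1)
        = z ^ (if 0 < (i : ℕ) then (((y i : Fin N) : ℕ) - ((x ⟨(i : ℕ) - 1,
            lt_of_le_of_lt (Nat.sub_le _ _) i.isLt⟩ : Fin N) : ℕ) - 1) else 0) by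
        split_ifs <;> simp)]
    rw [Finset.prod_pow_eq_pow_sum, ← pow_add, ← pow_add]
    congr 1
    -- exponent identity over ℕ, proven by casting to ℤ
    apply Nat.cast_injective (R := ℤ)
    push_cast [Nat.cast_sum]
    have hkN : k ≤ N := by
      calc k = X.card := hX.symm
        _ ≤ Fintype.card (Fin N) := Finset.card_le_univ X
        _ = N := Fintype.card_fin N
    have hmZ : ((Xᶜ.card : ℕ) : ℤ) = (N : ℤ) - k := by
      rw [Finset.card_compl, hX, Fintype.card_fin]; omega
    -- LHS as a difference of sums
    have htermL : ∀ j : Fin Xᶜ.card,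
        ((((a j : Fin N) : ℕ) + 1 - ((b j : Fin N) : ℕ) : ℕ) : ℤ)
          = (((a j : Fin N) : ℕ) : ℤ) + 1 - (((b j : Fin N) : ℕ) : ℤ) := by
      intro j; have h1 := ha1 j; have h2 := ha2 j; omega
    have hLHS : ∑ j : Fin Xᶜ.card, ((((a j : Fin N) : ℕ) + 1 - ((b j : Fin N) : ℕ) : ℕ) : ℤ)
        = (∑ j : Fin Xᶜ.card, (((a j : Fin N) : ℕ) : ℤ)) + (Xᶜ.card : ℤ)
          - ∑ j : Fin Xᶜ.card, (((b j : Fin N) : ℕ) : ℤ) := by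
      rw [Finset.sum_congr rfl fun j _ => htermL j, Finset.sum_sub_distrib,
        Finset.sum_add_distrib, Finset.sum_const, Finset.card_univ, Fintype.card_fin,
        nsmul_eq_mul, mul_one]
    -- sum transfers
    have hSa : (∑ j : Fin Xᶜ.card, (((a j : Fin N) : ℕ) : ℤ))
        = ∑ u ∈ Xᶜ, ((u : ℕ) : ℤ) := sum_emb rfl (fun u => ((u : ℕ) : ℤ))
    have hSb : (∑ j : Fin Xᶜ.card, (((b j : Fin N) : ℕ) : ℤ))
        = ∑ u ∈ Yᶜ, ((u : ℕ) : ℤ) := sum_emb hcompl (fun u => ((u : ℕ) : ℤ))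
    have hSx : (∑ i : Fin k, (((x i : Fin N) : ℕ) : ℤ))
        = ∑ u ∈ X, ((u : ℕ) : ℤ) := sum_emb hX (fun u => ((u : ℕ) : ℤ))
    have hSy : (∑ i : Fin k, (((y i : Fin N) : ℕ) : ℤ))
        = ∑ u ∈ Y, ((u : ℕ) : ℤ) := sum_emb hY (fun u => ((u : ℕ) : ℤ))
    have hCa : (∑ u ∈ Xᶜ, ((u : ℕ) : ℤ)) + ∑ u ∈ X, ((u : ℕ) : ℤ)
        = ∑ u : Fin N, ((u : ℕ) : ℤ) := Finset.sum_compl_add_sum X _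
    have hCb : (∑ u ∈ Yᶜ, ((u : ℕ) : ℤ)) + ∑ u ∈ Y, ((u : ℕ) : ℤ)
        = ∑ u : Fin N, ((u : ℕ) : ℤ) := Finset.sum_compl_add_sum Y _
    -- per-term strict inequality from interlacing
    have hxy : ∀ i : Fin k, 0 < (i : ℕ) →
        ((x ⟨(i : ℕ) - 1, lt_of_le_of_lt (Nat.sub_le _ _) i.isLt⟩ : Fin N) : ℕ)
          < ((y i : Fin N) : ℕ) := by
      intro i h0
      have h' : ((⟨(i : ℕ) - 1, lt_of_le_of_lt (Nat.sub_le _ _) i.isLt⟩ : Fin k) : ℕ) + 1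
          < k := by
        show (i : ℕ) - 1 + 1 < k; omega
      have hlt := hP2 _ h'
      have heqq : (⟨((⟨(i : ℕ) - 1, lt_of_le_of_lt (Nat.sub_le _ _) i.isLt⟩ : Fin k) : ℕ) + 1,
          h'⟩ : Fin k) = i := Fin.ext (by show (i : ℕ) - 1 + 1 = (i : ℕ); omega)
      rwa [heqq] at hlt
    -- push the cast inside the middle sum
    have hmid1 : ∀ i : Fin k,
        (if 0 < (i : ℕ) then
          ((((y i : Fin N) : ℕ) - ((x ⟨(i : ℕ) - 1,
              lt_of_le_of_lt (Nat.sub_le _ _) i.isLt⟩ : Fin N) : ℕ) - 1 : ℕ) : ℤ)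
        else 0)
        = (if 0 < (i : ℕ) then (((y i : Fin N) : ℕ) : ℤ) - (((x ⟨(i : ℕ) - 1,
              lt_of_le_of_lt (Nat.sub_le _ _) i.isLt⟩ : Fin N) : ℕ) : ℤ) - 1 else 0) := by
      intro i
      by_cases h0 : 0 < (i : ℕ)
      · rw [if_pos h0, if_pos h0]
        have := hxy i h0
        omega
      · rw [if_neg h0, if_neg h0]
    -- convert the middle sum to a sum over `range k` and shift indices
    set xv : ℕ → ℤ := fun n => if h : n < k then (((x ⟨n, h⟩ : Fin N) : ℕ) : ℤ) else 0 with hxv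
    set yv : ℕ → ℤ := fun n => if h : n < k then (((y ⟨n, h⟩ : Fin N) : ℕ) : ℤ) else 0 with hyv
    set f : ℕ → ℤ := fun n => if 0 < n then yv n - xv (n - 1) - 1 else 0 with hf
    have hmid2 : (∑ i : Fin k, (if 0 < (i : ℕ) then (((y i : Fin N) : ℕ) : ℤ)
          - (((x ⟨(i : ℕ) - 1, lt_of_le_of_lt (Nat.sub_le _ _) i.isLt⟩ : Fin N) : ℕ) : ℤ) - 1
        else 0))
        = ∑ n ∈ Finset.range k, f n := by
      rw [← Fin.sum_univ_eq_sum_range f k]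
      apply Finset.sum_congr rfl
      intro i _
      by_cases h0 : 0 < (i : ℕ)
      · rw [if_pos h0, hf]
        simp only []
        rw [if_pos h0, hyv, hxv]
        simp only []
        rw [dif_pos i.isLt, dif_pos (show (i : ℕ) - 1 < k by omega)]
      · rw [if_neg h0, hf]
        simp only []
        rw [if_neg h0]
    have hkk : k = (k - 1) + 1 := by omega
    have hf0 : f 0 = 0 := by simp [hf]
    have hkk' : k - 1 + 1 = k := Nat.sub_add_cancel hk
    have hrange : ∑ n ∈ Finset.range k, f n
        = ∑ n ∈ Finset.range (k - 1), f (n + 1) := by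
      conv_lhs => rw [← hkk']
      rw [Finset.sum_range_succ' f (k - 1), hf0, add_zero]
    have hfs : ∀ n, f (n + 1) = yv (n + 1) - xv n - 1 := by
      intro n; rw [hf]; simp only []; rw [if_pos (Nat.succ_pos n)]
      rfl
    have hshift : ∑ n ∈ Finset.range (k - 1), f (n + 1)
        = (∑ n ∈ Finset.range (k - 1), yv (n + 1))
          - (∑ n ∈ Finset.range (k - 1), xv n) - ((k : ℤ) - 1) := by
      rw [Finset.sum_congr rfl fun n _ => hfs n, Finset.sum_sub_distrib,
        Finset.sum_sub_distrib, Finset.sum_const, Finset.card_range, nsmul_eq_mul, mul_one]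
      have : ((k - 1 : ℕ) : ℤ) = (k : ℤ) - 1 := by omega
      rw [this]
    have hY1 : ∑ n ∈ Finset.range (k - 1), yv (n + 1)
        = (∑ n ∈ Finset.range k, yv n) - yv 0 := by
      have := Finset.sum_range_succ' yv (k - 1)
      rw [← hkk] at this
      rw [this]; ring
    have hX1 : ∑ n ∈ Finset.range (k - 1), xv n
        = (∑ n ∈ Finset.range k, xv n) - xv (k - 1) := by
      have := Finset.sum_range_succ xv (k - 1)
      rw [← hkk] at this
      rw [this]; ring
    have hYF : ∑ n ∈ Finset.range k, yv n = ∑ i : Fin k, (((y i : Fin N) : ℕ) : ℤ) := by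
      rw [← Fin.sum_univ_eq_sum_range yv k]
      apply Finset.sum_congr rfl
      intro i _
      rw [hyv]; simp only []; rw [dif_pos i.isLt]
    have hXF : ∑ n ∈ Finset.range k, xv n = ∑ i : Fin k, (((x i : Fin N) : ℕ) : ℤ) := by
      rw [← Fin.sum_univ_eq_sum_range xv k]
      apply Finset.sum_congr rfl
      intro i _
      rw [hxv]; simp only []; rw [dif_pos i.isLt]
    have hyv0 : yv 0 = (((y ⟨0, hk⟩ : Fin N) : ℕ) : ℤ) := by
      rw [hyv]; simp only []; rw [dif_pos hk]
    have hxvl : xv (k - 1) = (((x ⟨k - 1, Nat.sub_lt hk Nat.one_pos⟩ : Fin N) : ℕ) : ℤ) := by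
      rw [hxv]; simp only []; rw [dif_pos (Nat.sub_lt hk Nat.one_pos)]
    have hlast : ((N - 1 - ((x ⟨k - 1, Nat.sub_lt hk Nat.one_pos⟩ : Fin N) : ℕ) : ℕ) : ℤ)
        = (N : ℤ) - 1 - (((x ⟨k - 1, Nat.sub_lt hk Nat.one_pos⟩ : Fin N) : ℕ) : ℤ) := by
      have := (x ⟨k - 1, Nat.sub_lt hk Nat.one_pos⟩ : Fin N).isLt
      omega
    rw [hLHS, Finset.sum_congr rfl fun i _ => hmid1 i, hmid2, hrange, hshift, hY1, hX1,
      hYF, hXF, hyv0, hxvl, hlast, hSa, hSb, hmZ]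
    have hSx2 := hSx
    have hSy2 := hSy
    linarith [hCa, hCb, hSx, hSy]

  · rw [if_neg hP]
    rcases not_and_or.mp hP with h1 | h2
    · have hnot : ¬ ∀ j, ((a j : Fin N) : ℕ) ≤ ((b j : Fin N) : ℕ) := by
        intro hall
        exact h1 (fun i => hc1.mp hall i)
      push_neg at hnot
      obtain ⟨j, hj⟩ := hnot
      rw [hdet]
      apply Finset.prod_eq_zero (Finset.mem_univ j)
      rw [hAentry, if_neg (by omega), if_neg (by omega)]
    · have hnot : ¬ ∀ j, ((b j : Fin N) : ℕ) ≤ ((a j : Fin N) : ℕ) + 1 := by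
        intro hall
        exact h2 (fun i h => hc2.mp hall i h)
      push_neg at hnot
      obtain ⟨j, hj⟩ := hnot
      rw [hdet]
      apply Finset.prod_eq_zero (Finset.mem_univ j)
      rw [hAentry, if_neg (by omega), if_neg (by omega)]
end

section
/- In the setting of the Grushin problem (A with SVD data t_i, e_i, f_i; 0 ≤ t₁ ≤ ⋯ ≤ t_M ≤ α < t_{M+1} ≤ ⋯ ≤ t_N; 𝒫 = [[A, R₋],[R₊, 0]] with inverse ℰ = [[E, E₊],[E₋, E₋₊]]), the operator norms satisfy ‖E‖ ≤ 1/α (when t_{M+1} > α), ‖E₊‖ = ‖E₋‖ = 1, and ‖E₋₊‖ ≤ α. -/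
open Matrix

/-- `R₊ = Σ_{i=1}^M δ_i e_i* : ℂᴺ → ℂᴹ`. -/
def Rplus {N : ℕ} (M : ℕ) (hM : M ≤ N) (e : Fin N → Fin N → ℂ) :
    Matrix (Fin M) (Fin N) ℂ :=
  Matrix.of fun i j => star (e (Fin.castLE hM i) j)

/-- `R₋ = Σ_{i=1}^M f_i δ_i* : ℂᴹ → ℂᴺ`. -/
def Rminus {N : ℕ} (M : ℕ) (hM : M ≤ N) (f : Fin N → Fin N → ℂ) :
    Matrix (Fin N) (Fin M) ℂ :=
  Matrix.of fun i j => f (Fin.castLE hM j) i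

/-- `E = Σ_{i=M+1}^N t_i⁻¹ e_i f_i*`. -/
noncomputable def Emat {N : ℕ} (M : ℕ) (t : Fin N → ℝ) (e f : Fin N → Fin N → ℂ) :
    Matrix (Fin N) (Fin N) ℂ :=
  ∑ i ∈ Finset.univ.filter (fun i : Fin N => M ≤ (i : ℕ)),
    ((t i : ℂ))⁻¹ • Matrix.vecMulVec (e i) (fun b => star (f i b))

/-- `E₊ = Σ_{i=1}^M e_i δ_i*`. -/
def Eplus {N : ℕ} (M : ℕ) (hM : M ≤ N) (e : Fin N → Fin N → ℂ) :
    Matrix (Fin N) (Fin M) ℂ :=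
  Matrix.of fun a j => e (Fin.castLE hM j) a

/-- `E₋ = Σ_{i=1}^M δ_i f_i*`. -/
def Eminus {N : ℕ} (M : ℕ) (hM : M ≤ N) (f : Fin N → Fin N → ℂ) :
    Matrix (Fin M) (Fin N) ℂ :=
  Matrix.of fun i b => star (f (Fin.castLE hM i) b)

/-- `E₋₊ = −Σ_{i=1}^M t_i δ_i δ_i*`. -/
def Eminusplus {N : ℕ} (M : ℕ) (hM : M ≤ N) (t : Fin N → ℝ) :
    Matrix (Fin M) (Fin M) ℂ :=
  Matrix.of fun i j => if i = j then -(t (Fin.castLE hM i) : ℂ) else 0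


lemma sum_sq_eq {n : ℕ} (v : Fin n → ℂ) :
    ((∑ i, ‖v i‖^2 : ℝ) : ℂ) = star v ⬝ᵥ v := by
  push_cast
  simp [dotProduct, Complex.star_def, Complex.conj_mul', Complex.sq_norm, Complex.normSq_eq_norm_sq]

lemma unitary_sum_sq {n : ℕ} (G : Matrix (Fin n) (Fin n) ℂ) (hG : G * Gᴴ = 1) (x : Fin n → ℂ) :
    ∑ i, ‖G.mulVec x i‖^2 = ∑ i, ‖x i‖^2 := by
  have h2 : Gᴴ * G = 1 := mul_eq_one_comm.mp hG
  have key : star (G.mulVec x) ⬝ᵥ G.mulVec x = star x ⬝ᵥ x := by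
    rw [star_mulVec, ← dotProduct_mulVec, mulVec_mulVec, h2, one_mulVec]
  have := (sum_sq_eq (G.mulVec x)).trans (key.trans (sum_sq_eq x).symm)
  exact_mod_cast this

lemma sum_extend {β : Type*} [AddCommMonoid β] {N M : ℕ} (hM : M ≤ N) (F : Fin N → β)
    (hF : ∀ i : Fin N, M ≤ (i:ℕ) → F i = 0) :
    ∑ i : Fin N, F i = ∑ j : Fin M, F (Fin.castLE hM j) := by
  classical
  have hinj : Function.Injective (Fin.castLE hM) := Fin.castLE_injective hM
  rw [show (∑ j : Fin M, F (Fin.castLE hM j))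
      = ∑ i ∈ Finset.univ.map ⟨Fin.castLE hM, hinj⟩, F i by rw [Finset.sum_map]; rfl]
  symm
  apply Finset.sum_subset (Finset.subset_univ _)
  intro x _ hx
  apply hF
  by_contra h
  push_neg at h
  exact hx (Finset.mem_map.mpr ⟨⟨(x:ℕ), h⟩, Finset.mem_univ _, by ext; rfl⟩)

lemma sum_castLE_le {N M : ℕ} (hM : M ≤ N) (F : Fin N → ℝ) (hF : ∀ i, 0 ≤ F i) :
    ∑ j : Fin M, F (Fin.castLE hM j) ≤ ∑ i : Fin N, F i := by
  classical
  have hinj : Function.Injective (Fin.castLE hM) := Fin.castLE_injective hM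
  rw [show (∑ j : Fin M, F (Fin.castLE hM j))
      = ∑ i ∈ Finset.univ.map ⟨Fin.castLE hM, hinj⟩, F i by rw [Finset.sum_map]; rfl]
  exact Finset.sum_le_sum_of_subset_of_nonneg (Finset.subset_univ _) fun i _ _ => hF i

/-- The operator norm of a matrix induced by the Euclidean norms. -/
noncomputable def opNorm {m n : ℕ} (A : Matrix (Fin m) (Fin n) ℂ) : ℝ :=
  ‖(Matrix.toEuclideanLin A).toContinuousLinearMap‖


lemma opNorm_le_of_sq {m n : ℕ} (B : Matrix (Fin m) (Fin n) ℂ) (c : ℝ) (hc : 0 ≤ c)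
    (h : ∀ x : Fin n → ℂ, ∑ i, ‖B.mulVec x i‖^2 ≤ c^2 * ∑ i, ‖x i‖^2) :
    opNorm B ≤ c := by
  apply ContinuousLinearMap.opNorm_le_bound _ hc
  intro x
  rw [EuclideanSpace.norm_eq, EuclideanSpace.norm_eq]
  have hTx : ∀ i, (Matrix.toEuclideanLin B).toContinuousLinearMap x i
      = B.mulVec (fun j => x j) i := by
    intro i
    simp [Matrix.toEuclideanLin_apply, WithLp.equiv_symm_apply, PiLp.toLp_apply]
  calc Real.sqrt (∑ i, ‖(Matrix.toEuclideanLin B).toContinuousLinearMap x i‖^2)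
      = Real.sqrt (∑ i, ‖B.mulVec (fun j => x j) i‖^2) := by
        congr 1
    _ ≤ Real.sqrt (c^2 * ∑ j, ‖x j‖^2) := Real.sqrt_le_sqrt (h _)
    _ = c * Real.sqrt (∑ j, ‖x j‖^2) := by
        rw [Real.sqrt_mul (sq_nonneg c), Real.sqrt_sq hc]

lemma opNorm_ge_one {m n : ℕ} (B : Matrix (Fin m) (Fin n) ℂ) (x : Fin n → ℂ)
    (hx : ∑ j, ‖x j‖^2 = 1) (hBx : ∑ i, ‖B.mulVec x i‖^2 = 1) :
    1 ≤ opNorm B := by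
  set x' : EuclideanSpace ℂ (Fin n) := (WithLp.equiv 2 _).symm x with hx'
  have hnx : ‖x'‖ = 1 := by
    rw [EuclideanSpace.norm_eq]
    simp only [hx', WithLp.equiv_symm_apply, PiLp.toLp_apply]
    rw [hx, Real.sqrt_one]
  have hTx : ‖(Matrix.toEuclideanLin B).toContinuousLinearMap x'‖ = 1 := by
    rw [EuclideanSpace.norm_eq]
    have h1 : ∀ i, (Matrix.toEuclideanLin B).toContinuousLinearMap x' i = B.mulVec x i := by
      intro i
      simp [hx', Matrix.toEuclideanLin_apply, WithLp.equiv_symm_apply, PiLp.toLp_apply]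
    rw [Finset.sum_congr rfl fun i _ => by rw [h1], hBx, Real.sqrt_one]
  have := (Matrix.toEuclideanLin B).toContinuousLinearMap.le_opNorm x'
  rw [hTx, hnx, mul_one] at this
  exact this

set_option maxHeartbeats 2000000 in
/-- Norm estimates for the Grushin inverse blocks:
`‖E‖ ≤ 1/α`, `‖E₊‖ = ‖E₋‖ = 1`, `‖E₋₊‖ ≤ α`. -/
theorem grushin_norm_estimates
    (N M : ℕ) (hM : M ≤ N) (hM1 : 0 < M) (A : Matrix (Fin N) (Fin N) ℂ)
    (t : Fin N → ℝ) (e f : Fin N → Fin N → ℂ) (α : ℝ) (hα : 0 < α)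
    (ht0 : ∀ i, 0 ≤ t i) (htmono : Monotone t)
    (htle : ∀ i : Fin N, (i : ℕ) < M → t i ≤ α)
    (htgt : ∀ i : Fin N, M ≤ (i : ℕ) → α < t i)
    (he : ∀ i j, (∑ l, star (e i l) * e j l) = if i = j then 1 else 0)
    (hf : ∀ i j, (∑ l, star (f i l) * f j l) = if i = j then 1 else 0)
    (hAe : ∀ i, A.mulVec (e i) = (t i : ℂ) • f i)
    (hAf : ∀ i, Aᴴ.mulVec (f i) = (t i : ℂ) • e i) :
    opNorm (Emat M t e f) ≤ 1 / α ∧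
    opNorm (Eplus M hM e) = 1 ∧
    opNorm (Eminus M hM f) = 1 ∧
    opNorm (Eminusplus M hM t) ≤ α := by
  classical
  set G : Matrix (Fin N) (Fin N) ℂ := Matrix.of fun i b => star (f i b) with hGdef
  set H : Matrix (Fin N) (Fin N) ℂ := Matrix.of fun i b => star (e i b) with hHdef
  have hG : G * Gᴴ = 1 := by
    ext i j
    simpa [hGdef, Matrix.mul_apply, Matrix.one_apply] using hf i j
  have hH : H * Hᴴ = 1 := by
    ext i j
    simpa [hHdef, Matrix.mul_apply, Matrix.one_apply] using he i j
  have hHc : Hᴴ * (Hᴴ)ᴴ = 1 := by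
    rw [conjTranspose_conjTranspose]; exact mul_eq_one_comm.mp hH
  -- Part 1 : ‖E‖ ≤ 1/α
  have part1 : opNorm (Emat M t e f) ≤ 1 / α := by
    apply opNorm_le_of_sq _ _ (by positivity)
    intro x
    set c : Fin N → ℂ := G.mulVec x with hc
    set d : Fin N → ℂ := fun i => if M ≤ (i:ℕ) then ((t i : ℂ))⁻¹ * c i else 0 with hd
    have hEx : (Emat M t e f).mulVec x = Hᴴ.mulVec d := by
      ext a
      simp only [Matrix.mulVec, dotProduct, Emat, Matrix.sum_apply, Matrix.smul_apply,
        vecMulVec_apply, smul_eq_mul, Finset.sum_mul, conjTranspose_apply, hHdef, hGdef, hd, hc,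
        Matrix.of_apply, star_star, mul_ite, mul_zero]
      rw [Finset.sum_comm, ← Finset.sum_filter]
      apply Finset.sum_congr rfl
      intro i _
      rw [Finset.mul_sum, Finset.mul_sum]
      apply Finset.sum_congr rfl
      intro j _
      ring
    have h1 : ∑ a, ‖(Emat M t e f).mulVec x a‖^2 = ∑ i, ‖d i‖^2 := by
      rw [hEx]; exact unitary_sum_sq _ hHc d
    have h2 : ∑ i, ‖d i‖^2 ≤ (1/α)^2 * ∑ i, ‖c i‖^2 := by
      rw [Finset.mul_sum]
      apply Finset.sum_le_sum
      intro i _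
      by_cases hi : M ≤ (i:ℕ)
      · have ht : α < t i := htgt i hi
        have htpos : 0 < t i := lt_trans hα ht
        simp only [hd, if_pos hi, norm_mul, mul_pow]
        have hni : ‖((t i : ℝ) : ℂ)⁻¹‖ = (t i)⁻¹ := by
          rw [norm_inv, Complex.norm_real, Real.norm_eq_abs, abs_of_pos htpos]
        rw [hni]
        have hinv : (t i)⁻¹ ≤ 1/α := by
          rw [one_div]
          exact inv_anti₀ hα ht.le
        have h0 : (0:ℝ) ≤ (t i)⁻¹ := by positivity
        have := mul_le_mul_of_nonneg_right (pow_le_pow_left₀ h0 hinv 2) (sq_nonneg ‖c i‖)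
        exact this
      · have hdi : d i = 0 := by simp [hd, hi]
        rw [hdi, norm_zero, zero_pow (by norm_num : (2:ℕ) ≠ 0)]
        positivity
    have h3 : ∑ i, ‖c i‖^2 = ∑ i, ‖x i‖^2 := unitary_sum_sq _ hG x
    rw [h1]
    rw [← h3]
    exact h2
  -- Part 2 : ‖E₊‖ = 1
  have keyplus : ∀ y : Fin M → ℂ,
      ∑ a, ‖(Eplus M hM e).mulVec y a‖^2 = ∑ j, ‖y j‖^2 := by
    intro y
    set d : Fin N → ℂ := fun i => if h : (i:ℕ) < M then y ⟨(i:ℕ), h⟩ else 0 with hd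
    have hEy : (Eplus M hM e).mulVec y = Hᴴ.mulVec d := by
      ext a
      simp only [Matrix.mulVec, dotProduct, Eplus, Matrix.of_apply, conjTranspose_apply, hHdef,
        star_star]
      rw [sum_extend hM (fun i => e i a * d i)
        (fun i hi => by simp [hd, Nat.not_lt.mpr hi])]
      apply Finset.sum_congr rfl
      intro j _
      simp [hd, j.isLt]
    have hsum : ∑ i, ‖d i‖^2 = ∑ j, ‖y j‖^2 := by
      rw [sum_extend hM (fun i => ‖d i‖^2)
        (fun i hi => by simp [hd, Nat.not_lt.mpr hi])]
      apply Finset.sum_congr rfl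
      intro j _
      simp [hd, j.isLt]
    rw [hEy, unitary_sum_sq _ hHc d, hsum]
  have part2 : opNorm (Eplus M hM e) = 1 := by
    apply le_antisymm
    · apply opNorm_le_of_sq _ _ zero_le_one
      intro y
      rw [keyplus y, one_pow, one_mul]
    · set y : Fin M → ℂ := Pi.single ⟨0, hM1⟩ 1 with hy
      have hy1 : ∑ j, ‖y j‖^2 = 1 := by
        simp [hy, Pi.single_apply, apply_ite (‖·‖)]
      exact opNorm_ge_one _ y hy1 (by rw [keyplus y, hy1])
  -- Part 3 : ‖E₋‖ = 1
  have hEm : ∀ (x : Fin N → ℂ) (i : Fin M),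
      (Eminus M hM f).mulVec x i = G.mulVec x (Fin.castLE hM i) := by
    intro x i
    simp [Eminus, Matrix.mulVec, dotProduct, hGdef]
  have part3 : opNorm (Eminus M hM f) = 1 := by
    apply le_antisymm
    · apply opNorm_le_of_sq _ _ zero_le_one
      intro x
      rw [one_pow, one_mul]
      calc ∑ i, ‖(Eminus M hM f).mulVec x i‖^2
          = ∑ i : Fin M, ‖G.mulVec x (Fin.castLE hM i)‖^2 := by
            apply Finset.sum_congr rfl; intro i _; rw [hEm]
        _ ≤ ∑ i : Fin N, ‖G.mulVec x i‖^2 :=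
            sum_castLE_le hM (fun i => ‖G.mulVec x i‖^2) (fun i => sq_nonneg _)
        _ = ∑ i, ‖x i‖^2 := unitary_sum_sq _ hG x
    · set i0 : Fin N := Fin.castLE hM ⟨0, hM1⟩ with hi0
      have hx1 : ∑ b, ‖f i0 b‖^2 = 1 := by
        have h1 : ((∑ b, ‖f i0 b‖^2 : ℝ) : ℂ) = 1 := by
          rw [sum_sq_eq]
          simpa [dotProduct] using hf i0 i0
        exact_mod_cast h1
      apply opNorm_ge_one _ (f i0) hx1
      have hval : ∀ i : Fin M, (Eminus M hM f).mulVec (f i0) i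
          = if i = ⟨0, hM1⟩ then 1 else 0 := by
        intro i
        rw [hEm]
        have : G.mulVec (f i0) (Fin.castLE hM i)
            = if Fin.castLE hM i = i0 then 1 else 0 := by
          simpa [hGdef, Matrix.mulVec, dotProduct] using hf (Fin.castLE hM i) i0
        rw [this]
        congr 1
        simp only [eq_iff_iff]
        constructor
        · intro h; exact Fin.castLE_injective hM h
        · intro h; rw [h]
      calc ∑ i, ‖(Eminus M hM f).mulVec (f i0) i‖^2
          = ∑ i : Fin M, ‖(if i = ⟨0, hM1⟩ then (1:ℂ) else 0)‖^2 := by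
            apply Finset.sum_congr rfl; intro i _; rw [hval]
        _ = 1 := by
            simp [apply_ite (‖·‖)]
  -- Part 4 : ‖E₋₊‖ ≤ α
  have part4 : opNorm (Eminusplus M hM t) ≤ α := by
    apply opNorm_le_of_sq _ _ hα.le
    intro y
    have hval : ∀ i : Fin M, (Eminusplus M hM t).mulVec y i
        = -((t (Fin.castLE hM i) : ℝ) : ℂ) * y i := by
      intro i
      simp [Eminusplus, Matrix.mulVec, dotProduct, ite_mul, Finset.sum_ite_eq]
    rw [Finset.mul_sum]
    calc ∑ i, ‖(Eminusplus M hM t).mulVec y i‖^2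
        = ∑ i : Fin M, (t (Fin.castLE hM i))^2 * ‖y i‖^2 := by
          apply Finset.sum_congr rfl
          intro i _
          rw [hval, norm_mul, mul_pow, norm_neg, Complex.norm_real, Real.norm_eq_abs, sq_abs]
      _ ≤ ∑ i : Fin M, α^2 * ‖y i‖^2 := by
          apply Finset.sum_le_sum
          intro i _
          apply mul_le_mul_of_nonneg_right _ (sq_nonneg _)
          have h1 : t (Fin.castLE hM i) ≤ α := htle _ i.isLt
          exact pow_le_pow_left₀ (ht0 _) h1 2
  exact ⟨part1, part2, part3, part4⟩
end

section
/- In the setting of the Grushin problem with α-splitting of singular values (t_M ≤ α < t_{M+1}), the determinant of the block matrix 𝒫 = [[A, R₋],[R₊, 0]] has absolute value |det 𝒫| = ∏_{j=M+1}^N t_j. -/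
open Matrix

lemma my_sq_eq_of_sq_eq_sq {a b : ℝ} (ha : 0 ≤ a) (hb : 0 ≤ b) (h : a ^ 2 = b ^ 2) : a = b := by
  nlinarith [sq_nonneg (a - b), sq_nonneg (a + b)]

lemma my_abs_det_of_unitary {n : ℕ} {U : Matrix (Fin n) (Fin n) ℂ} (h : Uᴴ * U = 1) :
    ‖U.det‖ = 1 := by
  have h2 : star U.det * U.det = 1 := by
    rw [← Matrix.det_conjTranspose, ← Matrix.det_mul, h, Matrix.det_one]
  have h3 : ‖U.det‖ * ‖U.det‖ = 1 := by
    have h4 := congrArg norm h2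
    simpa [Complex.star_def, norm_mul, Complex.norm_conj] using h4
  nlinarith [norm_nonneg U.det]

/-- The determinant of the Grushin block matrix: `|det 𝒫| = ∏_{j=M+1}^N t_j`. -/
theorem grushin_det
    (N M : ℕ) (hM : M ≤ N) (A : Matrix (Fin N) (Fin N) ℂ)
    (t : Fin N → ℝ) (e f : Fin N → Fin N → ℂ) (α : ℝ) (hα : 0 < α)
    (ht0 : ∀ i, 0 ≤ t i) (htmono : Monotone t)
    (htle : ∀ i : Fin N, (i : ℕ) < M → t i ≤ α)
    (htgt : ∀ i : Fin N, M ≤ (i : ℕ) → α < t i)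
    (he : ∀ i j, (∑ l, star (e i l) * e j l) = if i = j then 1 else 0)
    (hf : ∀ i j, (∑ l, star (f i l) * f j l) = if i = j then 1 else 0)
    (hAe : ∀ i, A.mulVec (e i) = (t i : ℂ) • f i)
    (hAf : ∀ i, Aᴴ.mulVec (f i) = (t i : ℂ) • e i) :
    ‖(Matrix.det (Matrix.fromBlocks A (Rminus M hM f) (Rplus M hM e)
          (0 : Matrix (Fin M) (Fin M) ℂ)))‖ =
      ∏ i ∈ Finset.univ.filter (fun i : Fin N => M ≤ (i : ℕ)), t i := by
  set E : Matrix (Fin N) (Fin N) ℂ := Matrix.of fun a i => e i a with hEdef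
  set F : Matrix (Fin N) (Fin N) ℂ := Matrix.of fun a i => f i a with hFdef
  set T : Matrix (Fin N) (Fin N) ℂ := Matrix.diagonal fun i => (t i : ℂ) with hTdef
  set J : Matrix (Fin M) (Fin N) ℂ :=
    Matrix.of fun i k => if Fin.castLE hM i = k then 1 else 0 with hJdef
  -- unitarity
  have hE : Eᴴ * E = 1 := by
    ext i j
    simp only [Matrix.mul_apply, Matrix.conjTranspose_apply, hEdef, Matrix.of_apply,
      Matrix.one_apply]
    exact he i j
  have hF : Fᴴ * F = 1 := by
    ext i j
    simp only [Matrix.mul_apply, Matrix.conjTranspose_apply, hFdef, Matrix.of_apply,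
      Matrix.one_apply]
    exact hf i j
  have hEE : E * Eᴴ = 1 := mul_eq_one_comm.mp hE
  -- SVD: A = F T Eᴴ
  have hAE : A * E = F * T := by
    ext a j
    have h1 := congrFun (hAe j) a
    simp only [Matrix.mulVec, dotProduct, Pi.smul_apply, smul_eq_mul] at h1
    rw [Matrix.mul_apply, hTdef, Matrix.mul_diagonal]
    simp only [hEdef, hFdef, Matrix.of_apply]
    rw [h1]; ring
  have hA : A = F * T * Eᴴ := by
    calc A = A * (E * Eᴴ) := by rw [hEE, Matrix.mul_one]
    _ = (A * E) * Eᴴ := by rw [Matrix.mul_assoc]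
    _ = F * T * Eᴴ := by rw [hAE]
  -- R± in terms of J
  have hRp : Rplus M hM e = J * Eᴴ := by
    ext i j
    simp [Rplus, Matrix.mul_apply, hJdef, hEdef, Matrix.conjTranspose_apply, ite_mul]
  have hRm : Rminus M hM f = F * Jᴴ := by
    ext i j
    simp [Rminus, Matrix.mul_apply, hJdef, hFdef, Matrix.conjTranspose_apply, mul_ite,
      apply_ite star]
  -- Factorization of the block matrix
  set Q : Matrix (Fin N ⊕ Fin M) (Fin N ⊕ Fin M) ℂ := Matrix.fromBlocks T Jᴴ J 0 with hQdef
  have hP : Matrix.fromBlocks A (Rminus M hM f) (Rplus M hM e) (0 : Matrix (Fin M) (Fin M) ℂ)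
      = (Matrix.fromBlocks F 0 0 1) * Q * (Matrix.fromBlocks Eᴴ 0 0 1) := by
    rw [hQdef, Matrix.fromBlocks_multiply, Matrix.fromBlocks_multiply]
    simp [hA, hRp, hRm, Matrix.mul_assoc]
  -- J J^H = 1
  have hJJH : J * Jᴴ = 1 := by
    ext i j
    simp only [Matrix.mul_apply, Matrix.conjTranspose_apply, hJdef, Matrix.of_apply,
      apply_ite star, star_one, star_zero, ite_mul, one_mul, zero_mul, Matrix.one_apply]
    rw [Finset.sum_ite_eq Finset.univ (Fin.castLE hM i) (fun k => if Fin.castLE hM j = k then (1:ℂ) else 0)]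
    simp only [Finset.mem_univ, if_true]
    by_cases h : i = j
    · simp [h]
    · have : Fin.castLE hM j ≠ Fin.castLE hM i := fun hc => h ((Fin.castLE_injective hM) hc.symm)
      simp [h, this]
  -- J^H J is a projection diagonal
  have hJHJ : Jᴴ * J = Matrix.diagonal (fun k : Fin N => if (k : ℕ) < M then (1:ℂ) else 0) := by
    ext k l
    simp only [Matrix.mul_apply, Matrix.conjTranspose_apply, hJdef, Matrix.of_apply,
      apply_ite star, star_one, star_zero, ite_mul, one_mul, zero_mul, Matrix.diagonal_apply]
    by_cases hkM : (k : ℕ) < M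
    · have hcond : ∀ i : Fin M, (Fin.castLE hM i = k) ↔ i = ⟨(k : ℕ), hkM⟩ := by
        intro i
        constructor
        · intro h; exact Fin.ext (by simpa using congrArg Fin.val h)
        · intro h; subst h; rfl
      simp only [hcond]
      rw [Finset.sum_ite_eq' Finset.univ (⟨(k : ℕ), hkM⟩ : Fin M)
        (fun i => if Fin.castLE hM i = l then (1:ℂ) else 0)]
      simp only [Finset.mem_univ, if_true]
      by_cases hkl : k = l
      · subst hkl
        simp [hkM, show Fin.castLE hM (⟨(k : ℕ), hkM⟩ : Fin M) = k from rfl]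
      · have : Fin.castLE hM (⟨(k : ℕ), hkM⟩ : Fin M) ≠ l := by
          intro hc
          exact hkl (by rw [← hc]; rfl)
        simp [this, hkl]
    · have hcond : ∀ i : Fin M, Fin.castLE hM i ≠ k := by
        intro i hc
        exact hkM (hc ▸ i.isLt)
      simp [hcond, hkM]
  -- Q * Q
  have hQQ : Q * Q = Matrix.fromBlocks (T * T + Jᴴ * J) (T * Jᴴ) (J * T) 1 := by
    rw [hQdef, Matrix.fromBlocks_multiply]
    simp [hJJH]
  have hSchur : T * T + Jᴴ * J - (T * Jᴴ) * (J * T)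
      = Matrix.diagonal (fun k : Fin N => if (k : ℕ) < M then (1:ℂ) else (t k : ℂ)^2) := by
    have : (T * Jᴴ) * (J * T) = T * (Jᴴ * J) * T := by
      rw [Matrix.mul_assoc, Matrix.mul_assoc, Matrix.mul_assoc]
    rw [this, hJHJ, hTdef, Matrix.diagonal_mul_diagonal, Matrix.diagonal_mul_diagonal,
      Matrix.diagonal_mul_diagonal, Matrix.diagonal_add, Matrix.diagonal_sub]
    ext k l
    by_cases hkl : k = l
    · subst hkl
      by_cases h : (k : ℕ) < M <;> simp [h] <;> try ring
    · simp [Matrix.diagonal_apply_ne _ hkl]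
  have hdetQQ : (Q * Q).det = ∏ i ∈ Finset.univ.filter (fun i : Fin N => M ≤ (i : ℕ)),
      ((t i : ℂ))^2 := by
    rw [hQQ, Matrix.det_fromBlocks_one₂₂, hSchur, Matrix.det_diagonal]
    rw [Finset.prod_filter]
    apply Finset.prod_congr rfl
    intro k _
    by_cases h : (k : ℕ) < M
    · simp [h, Nat.not_le.mpr h]
    · simp [h, Nat.le_of_not_lt h]
  -- |det Q| = ∏ t
  have habsQ : ‖Q.det‖ = ∏ i ∈ Finset.univ.filter (fun i : Fin N => M ≤ (i : ℕ)), t i := by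
    have hprodnn : (0:ℝ) ≤ ∏ i ∈ Finset.univ.filter (fun i : Fin N => M ≤ (i : ℕ)), t i :=
      Finset.prod_nonneg fun i _ => ht0 i
    apply my_sq_eq_of_sq_eq_sq (norm_nonneg _) hprodnn
    have h1 : (‖Q.det‖)^2 = ‖((Q * Q).det)‖ := by
      rw [Matrix.det_mul, norm_mul, sq]
    rw [h1, hdetQQ]
    have h2 : (∏ i ∈ Finset.univ.filter (fun i : Fin N => M ≤ (i : ℕ)), ((t i : ℂ))^2)
        = (((∏ i ∈ Finset.univ.filter (fun i : Fin N => M ≤ (i : ℕ)), t i)^2 : ℝ) : ℂ) := by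
      push_cast
      rw [Finset.prod_pow]
    rw [h2, Complex.norm_real, Real.norm_eq_abs, abs_of_nonneg (by positivity)]
  -- assemble
  rw [hP, Matrix.det_mul, Matrix.det_mul, norm_mul, norm_mul,
    Matrix.det_fromBlocks_zero₂₁, Matrix.det_fromBlocks_zero₂₁, Matrix.det_one, mul_one, mul_one,
    my_abs_det_of_unitary hF, my_abs_det_of_unitary (by rw [Matrix.conjTranspose_conjTranspose]; exact hEE),
    one_mul, mul_one, habsQ]
end

section
/- Let A ∈ Mat_N(ℂ), Q ∈ Mat_N(ℂ), δ ≥ 0, and suppose 2δ‖Q‖/α ≤ 1 where α > 0 satisfies t_M ≤ α < t_{M+1} for the singular values of A. Let E, E₊, E₋, E₋₊ be the Grushin inverse blocks for A. Then Id_N + δQE is invertible, the perturbed Grushin matrix 𝒫^δ = [[A + δQ, R₋],[R₊, 0]] is invertible, and its inverse blocks satisfy ‖E^δ‖ = ‖E(Id + δQE)⁻¹‖ ≤ 2/α and ‖E₋₊^δ − E₋₊‖ = ‖E₋(Id + δQE)⁻¹ δQ E₊‖ ≤ 2δ‖Q‖ ≤ α. -/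
set_option maxHeartbeats 1000000

open Matrix

section Aux

open scoped Matrix.Norms.L2Operator

namespace GrushinAux

variable {N M : ℕ}

/-- Matrix with columns `e i`. -/
def W (e : Fin N → Fin N → ℂ) : Matrix (Fin N) (Fin N) ℂ := Matrix.of fun a i => e i a

/-- Inclusion `ℂᴹ → ℂᴺ`. -/
def J (hM : M ≤ N) : Matrix (Fin N) (Fin M) ℂ :=
  Matrix.of fun a j => if a = Fin.castLE hM j then 1 else 0

/-- Diagonal of inverse singular values above `M`. -/
noncomputable def D (M : ℕ) (t : Fin N → ℝ) : Matrix (Fin N) (Fin N) ℂ :=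
  Matrix.diagonal fun i => if M ≤ (i : ℕ) then ((t i : ℂ))⁻¹ else 0

/-- Diagonal of singular values. -/
def T (t : Fin N → ℝ) : Matrix (Fin N) (Fin N) ℂ :=
  Matrix.diagonal fun i => (t i : ℂ)

lemma opNorm_eq {m n : ℕ} (A : Matrix (Fin m) (Fin n) ℂ) : opNorm A = ‖A‖ := rfl

lemma W_unitary {e : Fin N → Fin N → ℂ}
    (he : ∀ i j, (∑ l, star (e i l) * e j l) = if i = j then 1 else 0) :
    (W e)ᴴ * W e = 1 := by
  ext i j
  simp only [Matrix.mul_apply, conjTranspose_apply, W, Matrix.of_apply, Matrix.one_apply]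
  exact he i j

lemma Emat_eq (t : Fin N → ℝ) (e f : Fin N → Fin N → ℂ) :
    Emat M t e f = W e * D M t * (W f)ᴴ := by
  ext a b
  rw [Matrix.mul_apply, Emat, Matrix.sum_apply, Finset.sum_filter]
  refine Finset.sum_congr rfl fun i _ => ?_
  simp only [Matrix.smul_apply, vecMulVec_apply, smul_eq_mul, D, Matrix.mul_diagonal,
    conjTranspose_apply, W, Matrix.of_apply]
  split_ifs with h
  · ring
  · simp

lemma Rplus_eq (hM : M ≤ N) (e : Fin N → Fin N → ℂ) :
    Rplus M hM e = (J hM)ᴴ * (W e)ᴴ := by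
  ext i j
  simp [Rplus, Matrix.mul_apply, conjTranspose_apply, J, W, apply_ite, ite_mul]

lemma Rminus_eq (hM : M ≤ N) (f : Fin N → Fin N → ℂ) :
    Rminus M hM f = W f * J hM := by
  ext i j
  simp [Rminus, Matrix.mul_apply, J, W, mul_ite, eq_comm]

lemma Eplus_eq (hM : M ≤ N) (e : Fin N → Fin N → ℂ) :
    Eplus M hM e = W e * J hM := by
  ext i j
  simp [Eplus, Matrix.mul_apply, J, W, mul_ite, eq_comm]

lemma Eminus_eq (hM : M ≤ N) (f : Fin N → Fin N → ℂ) :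
    Eminus M hM f = (J hM)ᴴ * (W f)ᴴ := by
  ext i j
  simp [Eminus, Matrix.mul_apply, conjTranspose_apply, J, W, apply_ite, ite_mul]

lemma JtTJ (hM : M ≤ N) (t : Fin N → ℝ) :
    (J hM)ᴴ * T t * J hM =
      Matrix.of fun i j : Fin M => if i = j then (t (Fin.castLE hM i) : ℂ) else 0 := by
  ext i j
  rw [Matrix.mul_apply, Finset.sum_eq_single (Fin.castLE hM j)]
  · rw [Matrix.mul_apply, Finset.sum_eq_single (Fin.castLE hM i)]
    · simp [J, T, conjTranspose_apply, Matrix.diagonal_apply, Fin.castLE_inj]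
    · intro b _ hb
      simp [J, conjTranspose_apply, fun h : b = Fin.castLE hM i => hb h]
    · simp
  · intro a _ ha
    simp [J, ha]
  · simp

lemma Eminusplus_eq (hM : M ≤ N) (t : Fin N → ℝ) :
    Eminusplus M hM t = -((J hM)ᴴ * T t * J hM) := by
  rw [JtTJ]
  ext i j
  simp only [Eminusplus, Matrix.of_apply, Matrix.neg_apply]
  split_ifs <;> simp

lemma JtJ (hM : M ≤ N) : (J hM)ᴴ * J hM = 1 := by
  ext i j
  rw [Matrix.mul_apply, Finset.sum_eq_single (Fin.castLE hM i)]
  · simp [J, conjTranspose_apply, Fin.castLE_inj, Matrix.one_apply, eq_comm]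
  · intro b _ hb
    simp [J, conjTranspose_apply, fun h : b = Fin.castLE hM i => hb h]
  · simp

lemma JJt (hM : M ≤ N) :
    J hM * (J hM)ᴴ = Matrix.diagonal fun a : Fin N => if (a : ℕ) < M then (1 : ℂ) else 0 := by
  ext a b
  rw [Matrix.mul_apply, Matrix.diagonal_apply]
  by_cases h : (a : ℕ) < M
  · rw [Finset.sum_eq_single (⟨(a : ℕ), h⟩ : Fin M)]
    · have ha : a = Fin.castLE hM ⟨(a : ℕ), h⟩ := by ext; rfl
      by_cases hb : a = b
      · subst hb
        simp [J, conjTranspose_apply, ← ha, h]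
      · have hbn : ¬ (b = Fin.castLE hM ⟨(a : ℕ), h⟩) := by
          rw [← ha]; exact fun hbb => hb hbb.symm
        rw [if_neg hb]
        have hz : (J hM)ᴴ (⟨(a : ℕ), h⟩ : Fin M) b = 0 := by
          rw [conjTranspose_apply, J]
          simp only [Matrix.of_apply, if_neg hbn, star_zero]
        rw [hz, mul_zero]
    · intro c _ hc
      have : ¬ (a = Fin.castLE hM c) := fun hac =>
        hc (by ext; exact (congrArg Fin.val hac).symm)
      simp [J, this]
    · simp
  · have hz : ∀ c ∈ Finset.univ, J hM a c * (J hM)ᴴ c b = 0 := by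
      intro c _
      have : ¬ (a = Fin.castLE hM c) := fun hac => h (by rw [hac]; simpa using c.isLt)
      simp [J, this]
    rw [Finset.sum_eq_zero hz]
    simp [h]

lemma TD (t : Fin N → ℝ) (hne : ∀ i : Fin N, M ≤ (i : ℕ) → (t i : ℂ) ≠ 0) :
    T t * D M t = Matrix.diagonal fun i : Fin N => if M ≤ (i : ℕ) then (1 : ℂ) else 0 := by
  rw [T, D, Matrix.diagonal_mul_diagonal]
  refine congrArg Matrix.diagonal (funext fun i => ?_)
  by_cases h : M ≤ (i : ℕ)
  · simpa [h] using mul_inv_cancel₀ (hne i h)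
  · simp [h]

lemma diag_chi_add :
    Matrix.diagonal (fun i : Fin N => if M ≤ (i : ℕ) then (1 : ℂ) else 0) +
      Matrix.diagonal (fun a : Fin N => if (a : ℕ) < M then (1 : ℂ) else 0) = 1 := by
  rw [Matrix.diagonal_add, ← Matrix.diagonal_one]
  refine congrArg Matrix.diagonal (funext fun i => ?_)
  by_cases h : M ≤ (i : ℕ)
  · simp [h, not_lt.mpr h]
  · simp [h, lt_of_not_ge h]

lemma JtD (hM : M ≤ N) (t : Fin N → ℝ) : (J hM)ᴴ * D M t = 0 := by
  ext i b
  rw [Matrix.mul_apply, Finset.sum_eq_single (Fin.castLE hM i)]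
  · have hlt : ¬ (M ≤ ((Fin.castLE hM i : Fin N) : ℕ)) := by
      simp only [Fin.coe_castLE]
      exact not_le.mpr i.isLt
    simp [J, D, conjTranspose_apply, Matrix.diagonal_apply, hlt]
  · intro b' _ hb'
    simp [J, conjTranspose_apply, fun h : b' = Fin.castLE hM i => hb' h]
  · simp

lemma chiTJ (hM : M ≤ N) (t : Fin N → ℝ) :
    Matrix.diagonal (fun a : Fin N => if (a : ℕ) < M then (1 : ℂ) else 0) * (T t * J hM)
      = T t * J hM := by
  ext a j
  rw [Matrix.diagonal_mul, T, Matrix.diagonal_mul]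
  by_cases haj : a = Fin.castLE hM j
  · have hlt : (a : ℕ) < M := by rw [haj]; simpa using j.isLt
    simp [hlt]
  · simp [J, haj]

lemma J_JtTJ (hM : M ≤ N) (t : Fin N → ℝ) :
    J hM * ((J hM)ᴴ * T t * J hM) = T t * J hM := by
  rw [Matrix.mul_assoc (J hM)ᴴ (T t) (J hM), ← Matrix.mul_assoc (J hM) (J hM)ᴴ (T t * J hM),
    JJt hM, chiTJ]

lemma AW (A : Matrix (Fin N) (Fin N) ℂ) (t : Fin N → ℝ) (e f : Fin N → Fin N → ℂ)
    (hAe : ∀ i, A.mulVec (e i) = (t i : ℂ) • f i) :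
    A * W e = W f * T t := by
  ext a i
  have h := congrFun (hAe i) a
  simp only [Pi.smul_apply, smul_eq_mul] at h
  calc (A * W e) a i = A.mulVec (e i) a := by
        simp [Matrix.mul_apply, Matrix.mulVec, dotProduct, W]
    _ = (t i : ℂ) * f i a := h
    _ = (W f * T t) a i := by
        rw [T, Matrix.mul_diagonal]
        simp [W, mul_comm]

/-- The unperturbed Grushin matrix times its inverse is one. -/
lemma PG_one (hM : M ≤ N) (A : Matrix (Fin N) (Fin N) ℂ) (t : Fin N → ℝ)
    (e f : Fin N → Fin N → ℂ)
    (he : ∀ i j, (∑ l, star (e i l) * e j l) = if i = j then 1 else 0)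
    (hf : ∀ i j, (∑ l, star (f i l) * f j l) = if i = j then 1 else 0)
    (hAe : ∀ i, A.mulVec (e i) = (t i : ℂ) • f i)
    (hne : ∀ i : Fin N, M ≤ (i : ℕ) → (t i : ℂ) ≠ 0) :
    Matrix.fromBlocks A (Rminus M hM f) (Rplus M hM e) (0 : Matrix (Fin M) (Fin M) ℂ) *
      Matrix.fromBlocks (Emat M t e f) (Eplus M hM e) (Eminus M hM f) (Eminusplus M hM t)
      = 1 := by
  have hUe := W_unitary he
  have hUf := W_unitary hf
  have hUfR : W f * (W f)ᴴ = 1 := mul_eq_one_comm.mp hUf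
  have h11 : A * Emat M t e f + Rminus M hM f * Eminus M hM f = 1 := by
    rw [Emat_eq, Rminus_eq, Eminus_eq]
    rw [← Matrix.mul_assoc, ← Matrix.mul_assoc, AW A t e f hAe]
    rw [Matrix.mul_assoc (W f) (T t) (D M t), TD t hne]
    rw [← Matrix.mul_assoc (W f * J hM) (J hM)ᴴ (W f)ᴴ,
      Matrix.mul_assoc (W f) (J hM) (J hM)ᴴ, JJt hM]
    rw [Matrix.mul_assoc (W f) _ ((W f)ᴴ), Matrix.mul_assoc (W f) _ ((W f)ᴴ),
      ← Matrix.mul_add, ← Matrix.add_mul, diag_chi_add, Matrix.one_mul, hUfR]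
  have h12 : A * Eplus M hM e + Rminus M hM f * Eminusplus M hM t = 0 := by
    rw [Eplus_eq, Rminus_eq, Eminusplus_eq]
    rw [← Matrix.mul_assoc A (W e) (J hM), AW A t e f hAe]
    rw [Matrix.mul_neg, Matrix.mul_assoc (W f) (J hM) _, J_JtTJ hM t]
    rw [Matrix.mul_assoc (W f) (T t) (J hM)]
    exact add_neg_cancel _
  have h21 : Rplus M hM e * Emat M t e f
      + (0 : Matrix (Fin M) (Fin M) ℂ) * Eminus M hM f = 0 := by
    rw [Matrix.zero_mul, add_zero, Rplus_eq, Emat_eq]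
    rw [← Matrix.mul_assoc, ← Matrix.mul_assoc,
      Matrix.mul_assoc (J hM)ᴴ (W e)ᴴ (W e), hUe, Matrix.mul_one, JtD hM t, Matrix.zero_mul]
  have h22 : Rplus M hM e * Eplus M hM e
      + (0 : Matrix (Fin M) (Fin M) ℂ) * Eminusplus M hM t = 1 := by
    rw [Matrix.zero_mul, add_zero, Rplus_eq, Eplus_eq]
    rw [← Matrix.mul_assoc, Matrix.mul_assoc (J hM)ᴴ (W e)ᴴ (W e), hUe, Matrix.mul_one, JtJ hM]
  rw [Matrix.fromBlocks_multiply, h11, h12, h21, h22, Matrix.fromBlocks_one]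

lemma norm_one_le (k : ℕ) : ‖(1 : Matrix (Fin k) (Fin k) ℂ)‖ ≤ 1 := by
  rw [Matrix.cstar_norm_def, _root_.map_one, ContinuousLinearMap.one_def]
  exact ContinuousLinearMap.norm_id_le

lemma norm_le_one {m n : ℕ} {U : Matrix (Fin m) (Fin n) ℂ} (h : Uᴴ * U = 1) : ‖U‖ ≤ 1 := by
  have h2 := Matrix.l2_opNorm_conjTranspose_mul_self U
  rw [h] at h2
  have h3 := norm_one_le n
  nlinarith [norm_nonneg U]

lemma norm_diagonal_le {n : ℕ} {v : Fin n → ℂ} {c : ℝ} (hc : 0 ≤ c) (h : ∀ i, ‖v i‖ ≤ c) :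
    ‖Matrix.diagonal v‖ ≤ c := by
  rw [Matrix.l2_opNorm_def]
  refine ContinuousLinearMap.opNorm_le_bound _ hc fun x => ?_
  rw [LinearEquiv.trans_apply]
  simp only [LinearMap.coe_toContinuousLinearMap']
  rw [Matrix.toEuclideanLin_apply, EuclideanSpace.norm_eq, EuclideanSpace.norm_eq]
  simp only [Matrix.mulVec_diagonal]
  have key : ∑ i, ‖v i * x i‖ ^ 2 ≤ c ^ 2 * ∑ i, ‖x i‖ ^ 2 := by
    rw [Finset.mul_sum]
    refine Finset.sum_le_sum fun i _ => ?_
    rw [norm_mul, mul_pow]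
    have h1 := h i
    have h2 := norm_nonneg (v i)
    have h4 : ‖v i‖ ^ 2 ≤ c ^ 2 := by nlinarith
    exact mul_le_mul_of_nonneg_right h4 (sq_nonneg _)
  calc Real.sqrt (∑ i, ‖v i * x i‖ ^ 2) ≤ Real.sqrt (c ^ 2 * ∑ i, ‖x i‖ ^ 2) :=
        Real.sqrt_le_sqrt key
    _ = c * Real.sqrt (∑ i, ‖x i‖ ^ 2) := by
        rw [Real.sqrt_mul (sq_nonneg c), Real.sqrt_sq hc]

end GrushinAux

end Aux

open scoped Matrix.Norms.L2Operator in
/-- Perturbed Grushin problem: if `2δ‖Q‖/α ≤ 1` then `Id + δQE` and the perturbed Grushin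
matrix `𝒫^δ` are invertible, with `‖E^δ‖ = ‖E(Id+δQE)⁻¹‖ ≤ 2/α` and
`‖E₋₊^δ − E₋₊‖ = ‖E₋(Id+δQE)⁻¹δQE₊‖ ≤ 2δ‖Q‖ ≤ α`. -/
theorem grushin_perturbed
    (N M : ℕ) (hM : M ≤ N) (A Q : Matrix (Fin N) (Fin N) ℂ) (δ : ℝ) (hδ : 0 ≤ δ)
    (t : Fin N → ℝ) (e f : Fin N → Fin N → ℂ) (α : ℝ) (hα : 0 < α)
    (ht0 : ∀ i, 0 ≤ t i) (htmono : Monotone t)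
    (htle : ∀ i : Fin N, (i : ℕ) < M → t i ≤ α)
    (htgt : ∀ i : Fin N, M ≤ (i : ℕ) → α < t i)
    (he : ∀ i j, (∑ l, star (e i l) * e j l) = if i = j then 1 else 0)
    (hf : ∀ i j, (∑ l, star (f i l) * f j l) = if i = j then 1 else 0)
    (hAe : ∀ i, A.mulVec (e i) = (t i : ℂ) • f i)
    (hAf : ∀ i, Aᴴ.mulVec (f i) = (t i : ℂ) • e i)
    (hsmall : 2 * δ * opNorm Q / α ≤ 1) :
    IsUnit ((1 : Matrix (Fin N) (Fin N) ℂ) + (δ : ℂ) • (Q * Emat M t e f)) ∧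
    IsUnit (Matrix.fromBlocks (A + (δ : ℂ) • Q) (Rminus M hM f) (Rplus M hM e)
      (0 : Matrix (Fin M) (Fin M) ℂ)) ∧
    opNorm (Emat M t e f *
        ((1 : Matrix (Fin N) (Fin N) ℂ) + (δ : ℂ) • (Q * Emat M t e f))⁻¹) ≤ 2 / α ∧
    opNorm (Eminus M hM f *
        ((1 : Matrix (Fin N) (Fin N) ℂ) + (δ : ℂ) • (Q * Emat M t e f))⁻¹ *
        ((δ : ℂ) • Q) * Eplus M hM e) ≤ 2 * δ * opNorm Q ∧
    2 * δ * opNorm Q ≤ α := by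
  classical
  simp only [GrushinAux.opNorm_eq] at hsmall ⊢
  have hQ0 : (0 : ℝ) ≤ ‖Q‖ := norm_nonneg Q
  have h2δq : 2 * δ * ‖Q‖ ≤ α := by rwa [div_le_one hα] at hsmall
  have hne : ∀ i : Fin N, M ≤ (i : ℕ) → (t i : ℂ) ≠ 0 := fun i h =>
    Complex.ofReal_ne_zero.mpr (ne_of_gt (lt_trans hα (htgt i h)))
  -- norm bounds on the Grushin inverse blocks
  have hUe := GrushinAux.W_unitary he
  have hUf := GrushinAux.W_unitary hf
  have hnUe : ‖GrushinAux.W e‖ ≤ 1 := GrushinAux.norm_le_one hUe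
  have hnUf : ‖GrushinAux.W f‖ ≤ 1 := GrushinAux.norm_le_one hUf
  have hnUfH : ‖(GrushinAux.W f)ᴴ‖ ≤ 1 := by
    rw [Matrix.l2_opNorm_conjTranspose]; exact hnUf
  have hnJ : ‖GrushinAux.J hM‖ ≤ 1 := GrushinAux.norm_le_one (GrushinAux.JtJ hM)
  have hnJH : ‖(GrushinAux.J hM)ᴴ‖ ≤ 1 := by
    rw [Matrix.l2_opNorm_conjTranspose]; exact hnJ
  have hnD : ‖GrushinAux.D M t‖ ≤ α⁻¹ := by
    refine GrushinAux.norm_diagonal_le (by positivity) fun i => ?_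
    by_cases h : M ≤ (i : ℕ)
    · rw [if_pos h]
      have h1 : α < t i := htgt i h
      rw [norm_inv, Complex.norm_real, Real.norm_eq_abs, abs_of_nonneg (ht0 i)]
      exact inv_anti₀ hα h1.le
    · rw [if_neg h]
      simp [inv_nonneg.mpr hα.le]
  have hnE : ‖Emat M t e f‖ ≤ α⁻¹ := by
    rw [GrushinAux.Emat_eq]
    calc ‖GrushinAux.W e * GrushinAux.D M t * (GrushinAux.W f)ᴴ‖
        ≤ ‖GrushinAux.W e * GrushinAux.D M t‖ * ‖(GrushinAux.W f)ᴴ‖ :=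
          Matrix.l2_opNorm_mul _ _
      _ ≤ (‖GrushinAux.W e‖ * ‖GrushinAux.D M t‖) * 1 := by
          refine mul_le_mul (Matrix.l2_opNorm_mul _ _) hnUfH (norm_nonneg _) ?_
          positivity
      _ ≤ (1 * α⁻¹) * 1 := by
          refine mul_le_mul_of_nonneg_right ?_ zero_le_one
          exact mul_le_mul hnUe hnD (norm_nonneg _) zero_le_one
      _ = α⁻¹ := by ring
  have hnEm : ‖Eminus M hM f‖ ≤ 1 := by
    rw [GrushinAux.Eminus_eq]
    calc ‖(GrushinAux.J hM)ᴴ * (GrushinAux.W f)ᴴ‖ ≤ ‖(GrushinAux.J hM)ᴴ‖ * ‖(GrushinAux.W f)ᴴ‖ :=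
          Matrix.l2_opNorm_mul _ _
      _ ≤ 1 * 1 := mul_le_mul hnJH hnUfH (norm_nonneg _) zero_le_one
      _ = 1 := one_mul 1
  have hnEp : ‖Eplus M hM e‖ ≤ 1 := by
    rw [GrushinAux.Eplus_eq]
    calc ‖GrushinAux.W e * GrushinAux.J hM‖ ≤ ‖GrushinAux.W e‖ * ‖GrushinAux.J hM‖ :=
          Matrix.l2_opNorm_mul _ _
      _ ≤ 1 * 1 := mul_le_mul hnUe hnJ (norm_nonneg _) zero_le_one
      _ = 1 := one_mul 1
  -- the perturbation X
  set X : Matrix (Fin N) (Fin N) ℂ := (δ : ℂ) • (Q * Emat M t e f) with hX_def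
  have hnX : ‖X‖ ≤ 1 / 2 := by
    have h1 : ‖X‖ = δ * ‖Q * Emat M t e f‖ := by
      rw [hX_def, norm_smul, Complex.norm_real, Real.norm_eq_abs, abs_of_nonneg hδ]
    have h2 : ‖Q * Emat M t e f‖ ≤ ‖Q‖ * α⁻¹ :=
      le_trans (Matrix.l2_opNorm_mul _ _) (mul_le_mul_of_nonneg_left hnE hQ0)
    have h3 : δ * (‖Q‖ * α⁻¹) ≤ 1 / 2 := by
      rw [← div_eq_mul_inv, ← mul_div_assoc, div_le_div_iff₀ hα (by norm_num : (0:ℝ) < 2)]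
      nlinarith
    calc ‖X‖ = δ * ‖Q * Emat M t e f‖ := h1
      _ ≤ δ * (‖Q‖ * α⁻¹) := mul_le_mul_of_nonneg_left h2 hδ
      _ ≤ 1 / 2 := h3
  have hXlt : ‖-X‖ < 1 := by rw [norm_neg]; linarith
  have hUnit : IsUnit ((1 : Matrix (Fin N) (Fin N) ℂ) + X) := by
    refine ⟨Units.oneSub (-X) hXlt, ?_⟩
    simp [Units.val_oneSub, sub_neg_eq_add]
  -- the inverse B and its norm
  set B : Matrix (Fin N) (Fin N) ℂ := ((1 : Matrix (Fin N) (Fin N) ℂ) + X)⁻¹ with hB_def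
  have hinv : ((1 : Matrix (Fin N) (Fin N) ℂ) + X) * B = 1 :=
    Matrix.mul_nonsing_inv _ ((Matrix.isUnit_iff_isUnit_det _).mp hUnit)
  have hBeq : B = 1 - X * B := by
    have h := hinv
    rw [Matrix.add_mul, Matrix.one_mul] at h
    exact eq_sub_of_add_eq h
  have hnB : ‖B‖ ≤ 2 := by
    have h2 : ‖X * B‖ ≤ ‖X‖ * ‖B‖ := Matrix.l2_opNorm_mul _ _
    have h3 : ‖X‖ * ‖B‖ ≤ (1 / 2) * ‖B‖ :=
      mul_le_mul_of_nonneg_right hnX (norm_nonneg _)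
    have h4 := GrushinAux.norm_one_le N
    have h1 : ‖B‖ ≤ ‖(1 : Matrix (Fin N) (Fin N) ℂ)‖ + ‖X * B‖ := by
      conv_lhs => rw [hBeq]
      exact norm_sub_le _ _
    linarith
  -- the Grushin matrix identities
  have hPG := GrushinAux.PG_one hM A t e f he hf hAe hne
  have hGP := mul_eq_one_comm.mp hPG
  rw [Matrix.fromBlocks_multiply, ← Matrix.fromBlocks_one] at hGP
  have hId1 : Emat M t e f * A + Eplus M hM e * Rplus M hM e = 1 := by
    have h := congrArg Matrix.toBlocks₁₁ hGP
    simp only [Matrix.toBlocks_fromBlocks₁₁] at h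
    exact h
  have hId2 : Emat M t e f * Rminus M hM f = 0 := by
    have h := congrArg Matrix.toBlocks₁₂ hGP
    simp only [Matrix.toBlocks_fromBlocks₁₂] at h
    rw [Matrix.mul_zero, add_zero] at h
    exact h
  -- assemble
  refine ⟨hUnit, ?_, ?_, ?_, h2δq⟩
  · -- invertibility of perturbed Grushin matrix
    have hfac : Matrix.fromBlocks (A + (δ : ℂ) • Q) (Rminus M hM f) (Rplus M hM e)
        (0 : Matrix (Fin M) (Fin M) ℂ)
        = Matrix.fromBlocks ((1 : Matrix (Fin N) (Fin N) ℂ) + X)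
            ((δ : ℂ) • (Q * Eplus M hM e)) 0 1 *
          Matrix.fromBlocks A (Rminus M hM f) (Rplus M hM e)
            (0 : Matrix (Fin M) (Fin M) ℂ) := by
      rw [Matrix.fromBlocks_multiply]
      have e11 : ((1 : Matrix (Fin N) (Fin N) ℂ) + X) * A
          + ((δ : ℂ) • (Q * Eplus M hM e)) * Rplus M hM e = A + (δ : ℂ) • Q := by
        rw [Matrix.add_mul, Matrix.one_mul, hX_def, Matrix.smul_mul, Matrix.smul_mul,
          Matrix.mul_assoc Q (Emat M t e f) A, Matrix.mul_assoc Q (Eplus M hM e) (Rplus M hM e),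
          add_assoc, ← smul_add, ← Matrix.mul_add, hId1, Matrix.mul_one]
      have e12 : ((1 : Matrix (Fin N) (Fin N) ℂ) + X) * Rminus M hM f
          + ((δ : ℂ) • (Q * Eplus M hM e)) * (0 : Matrix (Fin M) (Fin M) ℂ)
          = Rminus M hM f := by
        rw [Matrix.mul_zero, add_zero, Matrix.add_mul, Matrix.one_mul, hX_def, Matrix.smul_mul,
          Matrix.mul_assoc Q (Emat M t e f) (Rminus M hM f), hId2, Matrix.mul_zero, smul_zero,
          add_zero]
      have e21 : (0 : Matrix (Fin M) (Fin N) ℂ) * A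
          + (1 : Matrix (Fin M) (Fin M) ℂ) * Rplus M hM e = Rplus M hM e := by
        rw [Matrix.zero_mul, Matrix.one_mul, zero_add]
      have e22 : (0 : Matrix (Fin M) (Fin N) ℂ) * Rminus M hM f
          + (1 : Matrix (Fin M) (Fin M) ℂ) * (0 : Matrix (Fin M) (Fin M) ℂ) = 0 := by
        rw [Matrix.zero_mul, Matrix.mul_zero, add_zero]
      rw [e11, e12, e21, e22]
    rw [hfac]
    have hT : IsUnit (Matrix.fromBlocks ((1 : Matrix (Fin N) (Fin N) ℂ) + X)
        ((δ : ℂ) • (Q * Eplus M hM e)) 0 (1 : Matrix (Fin M) (Fin M) ℂ)) := by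
      rw [Matrix.isUnit_iff_isUnit_det, Matrix.det_fromBlocks_zero₂₁, Matrix.det_one, mul_one]
      exact (Matrix.isUnit_iff_isUnit_det _).mp hUnit
    have hP : IsUnit (Matrix.fromBlocks A (Rminus M hM f) (Rplus M hM e)
        (0 : Matrix (Fin M) (Fin M) ℂ)) :=
      (Matrix.isUnit_iff_isUnit_det _).mpr (Matrix.isUnit_det_of_right_inverse hPG)
    exact hT.mul hP
  · -- ‖E * B‖ ≤ 2/α
    calc ‖Emat M t e f * B‖ ≤ ‖Emat M t e f‖ * ‖B‖ := Matrix.l2_opNorm_mul _ _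
      _ ≤ α⁻¹ * 2 := mul_le_mul hnE hnB (norm_nonneg _) (by positivity)
      _ = 2 / α := by rw [div_eq_mul_inv]; ring
  · -- ‖E₋ * B * (δ•Q) * E₊‖ ≤ 2δ‖Q‖
    have hnδQ : ‖(δ : ℂ) • Q‖ = δ * ‖Q‖ := by
      rw [norm_smul, Complex.norm_real, Real.norm_eq_abs, abs_of_nonneg hδ]
    have step1 : ‖Eminus M hM f * B‖ ≤ 2 := by
      calc ‖Eminus M hM f * B‖ ≤ ‖Eminus M hM f‖ * ‖B‖ := Matrix.l2_opNorm_mul _ _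
        _ ≤ 1 * 2 := mul_le_mul hnEm hnB (norm_nonneg _) zero_le_one
        _ = 2 := one_mul 2
    have step2 : ‖Eminus M hM f * B * ((δ : ℂ) • Q)‖ ≤ 2 * (δ * ‖Q‖) := by
      calc ‖Eminus M hM f * B * ((δ : ℂ) • Q)‖
          ≤ ‖Eminus M hM f * B‖ * ‖(δ : ℂ) • Q‖ := Matrix.l2_opNorm_mul _ _
        _ ≤ 2 * (δ * ‖Q‖) := by
            rw [hnδQ]
            exact mul_le_mul_of_nonneg_right step1 (by positivity)
    calc ‖Eminus M hM f * B * ((δ : ℂ) • Q) * Eplus M hM e‖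
        ≤ ‖Eminus M hM f * B * ((δ : ℂ) • Q)‖ * ‖Eplus M hM e‖ := Matrix.l2_opNorm_mul _ _
      _ ≤ (2 * (δ * ‖Q‖)) * 1 := mul_le_mul step2 hnEp (norm_nonneg _) (by positivity)
      _ = 2 * δ * ‖Q‖ := by ring
end
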